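/- arXiv:alg-geom/9408007 — 2 statements merged into one kernel-verified Lean document; each statement's English description precedes it below -/
import Mathlib

section
/- (Claim 1 of Werner.) For every (x₀,y₀,z₀) ∈ k³ \ {(0,0,0)} at which all three partial derivatives ∂F_φ/∂x, ∂F_φ/∂y, ∂F_φ/∂z (computed in (ℤ/30047)[x,y,z] and evaluated in k) vanish, the projective point [x₀:y₀:z₀] ∈ ℙ²(k) equals one of the six points p, p1, p2, p3, p4, p5. In other words, the plane curve {F_φ = 0} over the algebraic closure k of ℤ/30047 has no singular points other than at p, p1, p2, p3, p4, p5. -/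
noncomputable section

open MvPolynomial

instance : Fact (Nat.Prime 30047) := ⟨by norm_num⟩

/-- The prime field `ℤ/30047`. -/
abbrev Fp : Type := ZMod 30047

/-- `k`, an algebraic closure of `ℤ/30047`. -/
abbrev kbar : Type := AlgebraicClosure Fp

def x : MvPolynomial (Fin 3) Fp := X 0
def y : MvPolynomial (Fin 3) Fp := X 1
def z : MvPolynomial (Fin 3) Fp := X 2

/-- The reduced octic `F_φ ∈ (ℤ/30047)[x,y,z]`. -/
def Fphi : MvPolynomial (Fin 3) Fp :=
  24082*x^4*y^4 + 3438*x^4*y^3*z + 4775*x^4*y^2*z^2 + 29499*x^4*y*z^3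
  + 12698*x^4*z^4 + 29927*x^3*y^5 + 14121*x^3*y^4*z + 17243*x^3*y^3*z^2
  + 3139*x^3*y^2*z^3 + 8704*x^3*y*z^4 + 80*x^3*z^5 + 28712*x^2*y^4*z^2
  + 10654*x^2*y^3*z^3 + 12817*x^2*y^2*z^4 + 8239*x^2*y*z^5 + 5515*x^2*z^6
  + 28759*x*y^3*z^4 + 7372*x*y^2*z^5 + 19696*x*y*z^6 + 28079*x*z^7
  + 1944*y^2*z^6 + 24003*y*z^7 + 13722*z^8

/-- `ᾱ = 20452` in `ℤ/30047`. -/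
def abar : Fp := 20452
/-- `β̄ = 6941` in `ℤ/30047`. -/
def bbar : Fp := 6941
/-- `δ̄ = 27962` in `ℤ/30047`. -/
def dbar : Fp := 27962

/-- A point of `ℙ²(k)` with coordinates in `ℤ/30047`, as a coordinate vector in `k³`. -/
def pk (a b c : Fp) : Fin 3 → kbar :=
  ![algebraMap Fp kbar a, algebraMap Fp kbar b, algebraMap Fp kbar c]

/-- Coordinate representative of `p = [1:0:0]`. -/
def ptP : Fin 3 → kbar := pk 1 0 0
/-- Coordinate representative of `p1 = [0:1:0]`. -/
def ptP1 : Fin 3 → kbar := pk 0 1 0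
/-- Coordinate representative of `p2 = [10+4ᾱ+4β̄ : 3δ̄ : 6]`. -/
def ptP2 : Fin 3 → kbar := pk (10+4*abar+4*bbar) (3*dbar) 6
/-- Coordinate representative of `p3 = [1:0:1]`. -/
def ptP3 : Fin 3 → kbar := pk 1 0 1
/-- Coordinate representative of `p4 = [16+4ᾱ+4β̄ : 3δ̄+6 : 12]`. -/
def ptP4 : Fin 3 → kbar := pk (16+4*abar+4*bbar) (3*dbar+6) 12
/-- Coordinate representative of `p5 = [16+4ᾱ+4β̄ : 3δ̄−6 : 12]`. -/
def ptP5 : Fin 3 → kbar := pk (16+4*abar+4*bbar) (3*dbar-6) 12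

/-!
The partial derivatives of `F_φ` are homogeneous of degree 7, so their common zeros form a cone
and it suffices to look at the line `z = 0` and at the chart `z = 1`. On `z = 0` the partials
`∂F_φ/∂x` and `∂F_φ/∂z` become `x²y⁴(6187x - 360y)` and `x³y³(3438x + 14121y)`, and the two linear
forms are independent mod 30047, so `x = 0` or `y = 0`. In the chart `z = 1` an explicit
combination of the three partials is `(x - 1)²(x - 8248)²(x - 19148)³`, and for each of these
roots the gcd of `∂F_φ/∂y` and `∂F_φ/∂z` as polynomials in `y` determines `y`. The resulting points
`[1:0:1]`, `[8248:13981:1]`, `[19148:6991:1]`, `[19148:6990:1]` are `p3, p2, p4, p5`.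
-/

theorem pderiv_ofNat {σ R : Type*} [CommSemiring R] (i : σ) (n : ℕ) [n.AtLeastTwo] :
    pderiv i (no_index (OfNat.ofNat n) : MvPolynomial σ R) = 0 :=
  (pderiv i).map_natCast n

theorem pderiv_zero_Fphi :
    pderiv 0 Fphi =
      6187*x^3*y^4 + 13752*x^3*y^3*z - 10947*x^3*y^2*z^2 - 2192*x^3*y*z^3 - 9302*x^3*z^4
      - 360*x^2*y^5 + 12316*x^2*y^4*z - 8365*x^2*y^3*z^2 + 9417*x^2*y^2*z^3 - 3935*x^2*y*z^4
      + 240*x^2*z^5 - 2670*x*y^4*z^2 - 8739*x*y^3*z^3 - 4413*x*y^2*z^4 - 13569*x*y*z^5 + 11030*x*z^6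
      - 1288*y^3*z^4 + 7372*y^2*z^5 - 10351*y*z^6 - 1968*z^7 := by
  -- `reduce_mod_char!` reads the characteristic off a local hypothesis.
  have : CharP (MvPolynomial (Fin 3) Fp) 30047 := inferInstance
  simp only [Fphi, x, y, z, map_add, pderiv_mul, pderiv_pow, pderiv_X_self, pderiv_ofNat,
    pderiv_X_of_ne, ne_eq, Fin.reduceEq, not_false_eq_true]
  linear_combination (norm := (ring_nf; reduce_mod_char!))

theorem pderiv_one_Fphi :
    pderiv 1 Fphi =
      6187*x^4*y^3 + 10314*x^4*y^2*z + 9550*x^4*y*z^2 - 548*x^4*z^3 - 600*x^3*y^4 - 3610*x^3*y^3*z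
      - 8365*x^3*y^2*z^2 + 6278*x^3*y*z^3 + 8704*x^3*z^4 - 5340*x^2*y^3*z^2 + 1915*x^2*y^2*z^3
      - 4413*x^2*y*z^4 + 8239*x^2*z^5 - 3864*x*y^2*z^4 + 14744*x*y*z^5 - 10351*x*z^6 + 3888*y*z^6
      - 6044*z^7 := by
  have : CharP (MvPolynomial (Fin 3) Fp) 30047 := inferInstance
  simp only [Fphi, x, y, z, map_add, pderiv_mul, pderiv_pow, pderiv_X_self, pderiv_ofNat,
    pderiv_X_of_ne, ne_eq, Fin.reduceEq, not_false_eq_true]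
  linear_combination (norm := (ring_nf; reduce_mod_char!))

theorem pderiv_two_Fphi :
    pderiv 2 Fphi =
      3438*x^4*y^3 + 9550*x^4*y^2*z - 1644*x^4*y*z^2 - 9302*x^4*z^3 + 14121*x^3*y^4 + 4439*x^3*y^3*z
      + 9417*x^3*y^2*z^2 + 4769*x^3*y*z^3 + 400*x^3*z^4 - 2670*x^2*y^4*z + 1915*x^2*y^3*z^2
      - 8826*x^2*y^2*z^3 + 11148*x^2*y*z^4 + 3043*x^2*z^5 - 5152*x*y^3*z^3 + 6813*x*y^2*z^4
      - 2012*x*y*z^5 - 13776*x*z^6 + 11664*y^2*z^5 - 12261*y*z^6 - 10412*z^7 := by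
  have : CharP (MvPolynomial (Fin 3) Fp) 30047 := inferInstance
  simp only [Fphi, x, y, z, map_add, pderiv_mul, pderiv_pow, pderiv_X_self, pderiv_ofNat,
    pderiv_X_of_ne, ne_eq, Fin.reduceEq, not_false_eq_true]
  linear_combination (norm := (ring_nf; reduce_mod_char!))

namespace Fphi

variable {K : Type*}

-- By Euler's identity, and since `8 ≠ 0` mod 30047, such a point also lies on `{F_φ = 0}`.
def IsSingularPoint [CommRing K] [Algebra Fp K] (P : Fin 3 → K) : Prop :=
  ∀ i, aeval P (pderiv i Fphi) = 0

theorem aeval_smul_pderiv [CommRing K] [Algebra Fp K] (t : K) (Q : Fin 3 → K) (i : Fin 3) :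
    aeval (t • Q) (pderiv i Fphi) = t ^ 7 * aeval Q (pderiv i Fphi) := by
  fin_cases i <;>
  · simp only [Fin.zero_eta, Fin.mk_one, Fin.reduceFinMk, pderiv_zero_Fphi, pderiv_one_Fphi,
      pderiv_two_Fphi, x, y, z, map_add, map_sub, map_mul, map_pow, map_ofNat, aeval_X,
      Pi.smul_apply, smul_eq_mul]
    ring

variable [Field K] [Algebra Fp K]

theorem isSingularPoint_smul_iff {t : K} (ht : t ≠ 0) {Q : Fin 3 → K} :
    IsSingularPoint (t • Q) ↔ IsSingularPoint Q := by
  simp only [IsSingularPoint, aeval_smul_pderiv, mul_eq_zero, pow_eq_zero_iff', ht, false_and,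
    false_or]

theorem IsSingularPoint.eq_zero_or_eq_zero {a b : K} (h : IsSingularPoint ![a, b, 0]) :
    a = 0 ∨ b = 0 := by
  have : CharP K 30047 := charP_of_injective_algebraMap' Fp 30047
  obtain ⟨hx, hz⟩ := And.intro (h 0) (h 2)
  simp only [pderiv_zero_Fphi, pderiv_two_Fphi, x, y, z, map_add, map_sub, map_mul, map_pow,
    map_ofNat, aeval_X, Matrix.cons_val] at hx hz
  have hx' : a ^ 2 * b ^ 4 * (6187 * a - 360 * b) = 0 := by linear_combination hx
  have hz' : a ^ 3 * b ^ 3 * (3438 * a + 14121 * b) = 0 := by linear_combination hz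
  by_contra! hab
  have h1 : 6187 * a - 360 * b = 0 := by simpa [hab] using hx'
  have h2 : 3438 * a + 14121 * b = 0 := by simpa [hab] using hz'
  -- `(-2752, 11918)` is the first row of the inverse of the coefficient matrix mod 30047.
  exact hab.1 (by linear_combination (norm := (ring_nf; reduce_mod_char!)) -2752 * h1 + 11918 * h2)

theorem IsSingularPoint.affine_eliminant {a b : K} (h : IsSingularPoint ![a, b, 1]) :
    (a - 1) ^ 2 * (a - 8248) ^ 2 * (a - 19148) ^ 3 = 0 := by
  have : CharP K 30047 := charP_of_injective_algebraMap' Fp 30047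
  obtain ⟨hx, hy, hz⟩ := And.intro (h 0) (And.intro (h 1) (h 2))
  simp only [pderiv_zero_Fphi, pderiv_one_Fphi, pderiv_two_Fphi, x, y, z, map_add, map_sub,
    map_mul, map_pow, map_ofNat, aeval_X, Matrix.cons_val] at hx hy hz
  linear_combination (norm := (ring_nf; reduce_mod_char!))
    (-5000*a^4*b - 477*a^3*b^2 - 2673*a^2*b^3 + 212*a*b^4 - 5257*a^4 - 6164*a^3*b + 7267*a^2*b^2
     + 549*a*b^3 + 8947*a^3 + 8493*a^2*b - 5879*a*b^2 - 10305*a^2 - 12254*a*b - 4977*b^2 + 12029*a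
     + 7477*b + 9954) * hx
    + (11097*a^3*b^2 - 291*a^2*b^3 + 13458*a*b^4 - 12146*b^5 - 5254*a^3*b + 8218*a^2*b^2
       - 8973*a*b^3 + 13727*b^4 - 9405*a^3 + 13364*a^2*b + 5140*a*b^2 + 5649*b^3 + 5865*a^2
       - 832*a*b + 6926*b^2 + 10648*a - 11990*b - 7108) * hy
    + (-703*a^3*b^2 - 3730*a^2*b^3 + 4909*a*b^4 + 8429*a^2*b^2 + 4456*a*b^3 - 5967*b^4 - 10547*a^2*b
       + 12203*a*b^2 + 8288*b^3 - 12290*a^2 - 9581*a*b - 3807*b^2 - 6671*a + 12680*b + 4282) * hz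

theorem IsSingularPoint.affine_cases {a b : K} (h : IsSingularPoint ![a, b, 1]) :
    (a = 8248 ∧ b = 13981) ∨ (a = 1 ∧ b = 0) ∨ (a = 19148 ∧ b = 6991) ∨
      (a = 19148 ∧ b = 6990) := by
  have : CharP K 30047 := charP_of_injective_algebraMap' Fp 30047
  have ha : a = 1 ∨ a = 8248 ∨ a = 19148 := by
    simpa [sub_eq_zero, or_assoc] using h.affine_eliminant
  obtain ⟨hy, hz⟩ := And.intro (h 1) (h 2)
  simp only [pderiv_one_Fphi, pderiv_two_Fphi, x, y, z, map_add, map_sub, map_mul, map_pow,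
    map_ofNat, aeval_X, Matrix.cons_val] at hy hz
  -- Bézout cofactors for the gcd of `∂F_φ/∂y` and `∂F_φ/∂z` in `K[b]` at each root `a`.
  rcases ha with rfl | rfl | rfl
  · have hb : b ^ 2 = 0 := by
      linear_combination (norm := (ring_nf; reduce_mod_char!))
        (-1755*b + 12414) * hy + (9189*b - 3953) * hz
    exact .inr (.inl ⟨rfl, pow_eq_zero_iff two_ne_zero |>.1 hb⟩)
  · have hb : (b - 13981) ^ 2 = 0 := by
      linear_combination (norm := (ring_nf; reduce_mod_char!))
        (7589*b - 2351) * hy + (-9962*b - 3829) * hz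
    exact .inl ⟨rfl, sub_eq_zero.1 (pow_eq_zero_iff two_ne_zero |>.1 hb)⟩
  · have hb : (b - 6991) * (b - 6990) = 0 := by
      linear_combination (norm := (ring_nf; reduce_mod_char!))
        (-12457*b - 14097) * hy + (-4830*b + 13982) * hz
    rcases mul_eq_zero.1 hb with hb | hb
    · exact .inr (.inr (.inl ⟨rfl, sub_eq_zero.1 hb⟩))
    · exact .inr (.inr (.inr ⟨rfl, sub_eq_zero.1 hb⟩))

end Fphi

theorem exists_ne_zero_smul_eq_of_smul {K V : Type*} [Field K] [AddCommGroup V] [Module K V]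
    {P Q R : V} {s u : K} (hs : s ≠ 0) (hu : u ≠ 0) (hP : P = s • Q) (hR : R = u • Q) :
    ∃ t : K, t ≠ 0 ∧ P = t • R :=
  ⟨s / u, div_ne_zero hs hu, by rw [hP, hR, smul_smul, div_mul_cancel₀ s hu]⟩

theorem pk_mul (s a b c : Fp) : pk (s * a) (s * b) (s * c) = algebraMap Fp kbar s • pk a b c := by
  ext i; fin_cases i <;> simp [pk]

theorem ptP_eq : ptP = ![1, 0, 0] := by
  simp only [ptP, pk, map_one, map_zero]

theorem ptP1_eq : ptP1 = ![0, 1, 0] := by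
  simp only [ptP1, pk, map_one, map_zero]

theorem ptP3_eq : ptP3 = ![1, 0, 1] := by
  simp only [ptP3, pk, map_one, map_zero]

theorem ptP2_eq : ptP2 = algebraMap Fp kbar 6 • ![8248, 13981, 1] := by
  rw [show ptP2 = pk (6 * 8248) (6 * 13981) (6 * 1) from rfl, pk_mul]
  simp only [pk, map_ofNat, map_one]

theorem ptP4_eq : ptP4 = algebraMap Fp kbar 12 • ![19148, 6991, 1] := by
  rw [show ptP4 = pk (12 * 19148) (12 * 6991) (12 * 1) from rfl, pk_mul]
  simp only [pk, map_ofNat, map_one]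

theorem ptP5_eq : ptP5 = algebraMap Fp kbar 12 • ![19148, 6990, 1] := by
  rw [show ptP5 = pk (12 * 19148) (12 * 6990) (12 * 1) from rfl, pk_mul]
  simp only [pk, map_ofNat, map_one]

namespace Fphi

theorem IsSingularPoint.exists_smul_of_eq_zero {P : Fin 3 → kbar} (h : IsSingularPoint P)
    (hP : P ≠ 0) (hz : P 2 = 0) : ∃ t : kbar, t ≠ 0 ∧ (P = t • ptP ∨ P = t • ptP1) := by
  have hcoord : P = ![P 0, P 1, 0] := by ext i; fin_cases i <;> simp [hz]
  rw [hcoord] at h hP ⊢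
  rcases h.eq_zero_or_eq_zero with h0 | h1
  · refine ⟨P 1, fun h1 => hP ?_, .inr ?_⟩
    · simp [h0, h1]
    · simp [h0, ptP1_eq]
  · refine ⟨P 0, fun h0 => hP ?_, .inl ?_⟩
    · simp [h0, h1]
    · simp [h1, ptP_eq]

theorem IsSingularPoint.exists_smul_of_ne_zero {P : Fin 3 → kbar} (h : IsSingularPoint P)
    (hz : P 2 ≠ 0) :
    ∃ t : kbar, t ≠ 0 ∧ (P = t • ptP2 ∨ P = t • ptP3 ∨ P = t • ptP4 ∨ P = t • ptP5) := by
  have hchart : P = P 2 • ![P 0 / P 2, P 1 / P 2, 1] := by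
    ext i; fin_cases i <;> simp [mul_div_cancel₀ _ hz]
  have haff : IsSingularPoint ![P 0 / P 2, P 1 / P 2, 1] := by
    rw [← isSingularPoint_smul_iff hz, ← hchart]; exact h
  have h6 : algebraMap Fp kbar 6 ≠ 0 := (map_ne_zero _).2 (by decide)
  have h12 : algebraMap Fp kbar 12 ≠ 0 := (map_ne_zero _).2 (by decide)
  rcases haff.affine_cases with ⟨ha, hb⟩ | ⟨ha, hb⟩ | ⟨ha, hb⟩ | ⟨ha, hb⟩ <;>
    rw [ha, hb] at hchart
  · obtain ⟨t, ht, hP⟩ := exists_ne_zero_smul_eq_of_smul hz h6 hchart ptP2_eq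
    exact ⟨t, ht, .inl hP⟩
  · exact ⟨P 2, hz, .inr (.inl (ptP3_eq ▸ hchart))⟩
  · obtain ⟨t, ht, hP⟩ := exists_ne_zero_smul_eq_of_smul hz h12 hchart ptP4_eq
    exact ⟨t, ht, .inr (.inr (.inl hP))⟩
  · obtain ⟨t, ht, hP⟩ := exists_ne_zero_smul_eq_of_smul hz h12 hchart ptP5_eq
    exact ⟨t, ht, .inr (.inr (.inr hP))⟩

end Fphi

/-- Claim 1 of Werner: the curve `{F_φ = 0}` over the algebraic closure
`k` of `ℤ/30047` has no singular points other than at `p, p1, p2, p3, p4, p5`. -/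
theorem Fphi_no_other_singularities (P : Fin 3 → kbar) (hP : P ≠ 0)
    (hsing : ∀ i : Fin 3, aeval P (pderiv i Fphi) = 0) :
    ∃ t : kbar, t ≠ 0 ∧
      (P = t • ptP ∨ P = t • ptP1 ∨ P = t • ptP2 ∨ P = t • ptP3 ∨
        P = t • ptP4 ∨ P = t • ptP5) := by
  have h : Fphi.IsSingularPoint P := hsing
  by_cases hz : P 2 = 0
  · obtain ⟨t, ht, hP⟩ := h.exists_smul_of_eq_zero hP hz
    exact ⟨t, ht, by tauto⟩
  · obtain ⟨t, ht, hP⟩ := h.exists_smul_of_ne_zero hz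
    exact ⟨t, ht, by tauto⟩
end
end

section
/- (a) Every monomial occurring in F_φ has degree at most 4 in x, and the coefficient of x^4 in F_φ, namely the binary quartic 24082y^4 + 3438y^3z + 4775y^2z^2 + 29499yz^3 + 12698z^4, is squarefree over k (it has four distinct roots in ℙ¹(k)); hence the curve {F_φ = 0} has an ordinary point of multiplicity 4 at p = [1:0:0]. (b) Every monomial occurring in F_φ has combined degree at least 3 in the variables x and z, and the only monomial of F_φ whose combined degree in x and z equals 3 is 29927x^3y^5; hence {F_φ = 0} has a point of multiplicity 3 at p1 = [0:1:0] whose tangent cone is the triple line x = 0. -/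
noncomputable section

open MvPolynomial

/-- `F_φ` with coefficients pushed into the algebraic closure `k`. -/
def Fphik : MvPolynomial (Fin 3) kbar :=
  MvPolynomial.map (algebraMap Fp kbar) Fphi

/-- The binary quartic `24082y⁴ + 3438y³z + 4775y²z² + 29499yz³ + 12698z⁴` over `k`
(variables `X 0 = y`, `X 1 = z`). -/
def quarticCoeff : MvPolynomial (Fin 2) kbar :=
  24082*(X 0)^4 + 3438*(X 0)^3*(X 1) + 4775*(X 0)^2*(X 1)^2
    + 29499*(X 0)*(X 1)^3 + 12698*(X 1)^4

lemma pderiv_num (n : ℕ) [n.AtLeastTwo] :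
    (pderiv (R := kbar) (σ := Fin 2) 0) (no_index (OfNat.ofNat n)) = 0 := by
  rw [← map_ofNat (C : kbar →+* MvPolynomial (Fin 2) kbar) n, pderiv_C]

lemma primeX1 : Prime (X 1 : MvPolynomial (Fin 2) kbar) := by
  rw [← MulEquiv.prime_iff ((renameEquiv kbar (Equiv.swap (0:Fin 2) 1)).trans
      (finSuccEquiv kbar 1)).toMulEquiv]
  have h : ((renameEquiv kbar (Equiv.swap (0:Fin 2) 1)).trans
      (finSuccEquiv kbar 1)).toMulEquiv (X 1) = Polynomial.X := by
    simp [Equiv.swap_apply_right, finSuccEquiv_X_zero]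
  rw [h]
  exact Polynomial.prime_X

lemma hqder : (pderiv 0) quarticCoeff =
    96328*(X 0)^3 + 10314*(X 0)^2*(X 1) + 9550*(X 0)*(X 1)^2 + 29499*(X 1)^3 := by
  simp [quarticCoeff, pderiv_X_self, pderiv_X_of_ne, pderiv_num]
  ring

lemma h30 : (30047 : MvPolynomial (Fin 2) kbar) = 0 := by
  have h1 : (30047 : kbar) = algebraMap Fp kbar (30047 : Fp) := (map_ofNat _ _).symm
  have h2 : (30047 : kbar) = 0 := by rw [h1, show (30047 : Fp) = 0 by decide, map_zero]
  have h3 : (30047 : MvPolynomial (Fin 2) kbar) = C (30047 : kbar) := (map_ofNat C 30047).symm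
  rw [h3, h2, map_zero]

lemma bez : (9019*(X 1)^2 + 10047*(X 0)*(X 1) + 27235*(X 0)^2) * quarticCoeff
    + (20642*(X 1)^3 + 24793*(X 0)*(X 1)^2 + 11097*(X 0)^2*(X 1) + 703*(X 0)^3)
      * (pderiv 0) quarticCoeff
    = (X 1 : MvPolynomial (Fin 2) kbar)^6 := by
  rw [hqder]
  unfold quarticCoeff
  linear_combination (24077*(X 1:MvPolynomial (Fin 2) kbar)^6 + 44002*(X 0)*(X 1)^5
    + 48667*(X 0)^2*(X 1)^4 + 108271*(X 0)^3*(X 1)^3 + 96223*(X 0)^4*(X 1)^2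
    + 46986*(X 0)^5*(X 1) + 24082*(X 0)^6) * h30

lemma not_X1_dvd : ¬ (X 1 : MvPolynomial (Fin 2) kbar) ∣ quarticCoeff := by
  intro ⟨w, hw⟩
  have h := congrArg (eval ![(1:kbar), 0]) hw
  simp [quarticCoeff] at h
  have h1 : (24082 : kbar) = algebraMap Fp kbar (24082 : Fp) := (map_ofNat _ _).symm
  rw [h1] at h
  have := (map_eq_zero (algebraMap Fp kbar)).mp h
  exact absurd this (by decide)

lemma quartic_squarefree : Squarefree quarticCoeff := by
  intro g hg
  obtain ⟨h, hh⟩ := hg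
  have hgq : g ∣ quarticCoeff := ⟨g*h, by rw [hh]; ring⟩
  have hgd : g ∣ (pderiv 0) quarticCoeff := by
    refine ⟨pderiv 0 g * h + (pderiv 0 g * h + g * pderiv 0 h), ?_⟩
    rw [hh, pderiv_mul, pderiv_mul]; ring
  have hZ : g ∣ (X 1 : MvPolynomial (Fin 2) kbar)^6 := by
    rw [← bez]
    exact dvd_add (hgq.mul_left _) (hgd.mul_left _)
  obtain ⟨i, _, hass⟩ := (dvd_prime_pow primeX1 6).mp hZ
  match i with
  | 0 => exact hass.symm.isUnit (show IsUnit ((X 1 : MvPolynomial (Fin 2) kbar) ^ 0) by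
      rw [pow_zero]; exact isUnit_one)
  | (j+1) =>
    exfalso
    apply not_X1_dvd
    exact dvd_trans (dvd_trans (dvd_pow_self (X 1) (Nat.succ_ne_zero j)) hass.symm.dvd) hgq

lemma hFk : Fphik =
  24082*(X 0)^4*(X 1)^4 + 3438*(X 0)^4*(X 1)^3*(X 2) + 4775*(X 0)^4*(X 1)^2*(X 2)^2
  + 29499*(X 0)^4*(X 1)*(X 2)^3 + 12698*(X 0)^4*(X 2)^4 + 29927*(X 0)^3*(X 1)^5
  + 14121*(X 0)^3*(X 1)^4*(X 2) + 17243*(X 0)^3*(X 1)^3*(X 2)^2 + 3139*(X 0)^3*(X 1)^2*(X 2)^3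
  + 8704*(X 0)^3*(X 1)*(X 2)^4 + 80*(X 0)^3*(X 2)^5 + 28712*(X 0)^2*(X 1)^4*(X 2)^2
  + 10654*(X 0)^2*(X 1)^3*(X 2)^3 + 12817*(X 0)^2*(X 1)^2*(X 2)^4 + 8239*(X 0)^2*(X 1)*(X 2)^5
  + 5515*(X 0)^2*(X 2)^6 + 28759*(X 0)*(X 1)^3*(X 2)^4 + 7372*(X 0)*(X 1)^2*(X 2)^5
  + 19696*(X 0)*(X 1)*(X 2)^6 + 28079*(X 0)*(X 2)^7 + 1944*(X 1)^2*(X 2)^6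
  + 24003*(X 1)*(X 2)^7 + 13722*(X 2)^8 := by
  simp only [Fphik, Fphi, x, y, z, map_add, map_mul, map_pow, MvPolynomial.map_X,
    MvPolynomial.map_ofNat]

lemma hsplit : (finSuccEquiv kbar 2) Fphik =
    Polynomial.C (24082*(X 0)^4 + 3438*(X 0)^3*(X 1) + 4775*(X 0)^2*(X 1)^2
      + 29499*(X 0)*(X 1)^3 + 12698*(X 1)^4) * Polynomial.X^4
  + Polynomial.C (29927*(X 0)^5 + 14121*(X 0)^4*(X 1) + 17243*(X 0)^3*(X 1)^2
      + 3139*(X 0)^2*(X 1)^3 + 8704*(X 0)*(X 1)^4 + 80*(X 1)^5) * Polynomial.X^3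
  + Polynomial.C (28712*(X 0)^4*(X 1)^2 + 10654*(X 0)^3*(X 1)^3 + 12817*(X 0)^2*(X 1)^4
      + 8239*(X 0)*(X 1)^5 + 5515*(X 1)^6) * Polynomial.X^2
  + Polynomial.C (28759*(X 0)^3*(X 1)^4 + 7372*(X 0)^2*(X 1)^5 + 19696*(X 0)*(X 1)^6
      + 28079*(X 1)^7) * Polynomial.X
  + Polynomial.C (1944*(X 0)^2*(X 1)^6 + 24003*(X 0)*(X 1)^7 + 13722*(X 1)^8) := by
  have e1 : (finSuccEquiv kbar 2) (X 1) = Polynomial.C (X 0) := by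
    rw [show (1 : Fin 3) = Fin.succ 0 from rfl, finSuccEquiv_X_succ]
  have e2 : (finSuccEquiv kbar 2) (X 2) = Polynomial.C (X 1) := by
    rw [show (2 : Fin 3) = Fin.succ 1 from rfl, finSuccEquiv_X_succ]
  rw [hFk]
  simp only [map_add, map_mul, map_pow, map_ofNat, e1, e2, finSuccEquiv_X_zero]
  ring

lemma coeff4 : ((finSuccEquiv kbar 2) Fphik).coeff 4 = quarticCoeff := by
  rw [hsplit]
  simp only [Polynomial.coeff_add, Polynomial.coeff_C_mul, Polynomial.coeff_X_pow,
    Polynomial.coeff_C, Polynomial.coeff_X]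
  norm_num [quarticCoeff]


section Aux
open Finsupp

def fs3 (a b c : ℕ) : Fin 3 →₀ ℕ := single 0 a + single 1 b + single 2 c

lemma fs3_apply_0 (a b c : ℕ) : fs3 a b c 0 = a := by
  simp [fs3, Finsupp.single_apply]
lemma fs3_apply_1 (a b c : ℕ) : fs3 a b c 1 = b := by
  simp [fs3, Finsupp.single_apply]
lemma fs3_apply_2 (a b c : ℕ) : fs3 a b c 2 = c := by
  simp [fs3, Finsupp.single_apply]

lemma mono3 (a b c : ℕ) (k : Fp) :
    (monomial (fs3 a b c) k : MvPolynomial (Fin 3) Fp)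
      = C k * X 0 ^ a * X 1 ^ b * X 2 ^ c := by
  simp [fs3, monomial_eq, Finsupp.prod_add_index, Finsupp.prod_single_index, pow_add]
  ring

lemma coeff_mono3_ne {m : Fin 3 →₀ ℕ} {a b c : ℕ} {k : Fp}
    (h : ¬(m 0 = a ∧ m 1 = b ∧ m 2 = c)) :
    MvPolynomial.coeff m (monomial (fs3 a b c) k) = 0 := by
  rw [MvPolynomial.coeff_monomial, if_neg]
  rintro rfl
  exact h ⟨fs3_apply_0 a b c, fs3_apply_1 a b c, fs3_apply_2 a b c⟩

lemma hF : Fphi =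
    monomial (fs3 4 4 0) 24082
  + monomial (fs3 4 3 1) 3438
  + monomial (fs3 4 2 2) 4775
  + monomial (fs3 4 1 3) 29499
  + monomial (fs3 4 0 4) 12698
  + monomial (fs3 3 5 0) 29927
  + monomial (fs3 3 4 1) 14121
  + monomial (fs3 3 3 2) 17243
  + monomial (fs3 3 2 3) 3139
  + monomial (fs3 3 1 4) 8704
  + monomial (fs3 3 0 5) 80
  + monomial (fs3 2 4 2) 28712
  + monomial (fs3 2 3 3) 10654
  + monomial (fs3 2 2 4) 12817
  + monomial (fs3 2 1 5) 8239
  + monomial (fs3 2 0 6) 5515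
  + monomial (fs3 1 3 4) 28759
  + monomial (fs3 1 2 5) 7372
  + monomial (fs3 1 1 6) 19696
  + monomial (fs3 1 0 7) 28079
  + monomial (fs3 0 2 6) 1944
  + monomial (fs3 0 1 7) 24003
  + monomial (fs3 0 0 8) 13722 := by
  simp only [Fphi, x, y, z, mono3, map_ofNat]
  ring

lemma support_char : ∀ m ∈ Fphi.support, (m 0 = 4 ∧ m 1 = 4 ∧ m 2 = 0)
      ∨ (m 0 = 4 ∧ m 1 = 3 ∧ m 2 = 1)
      ∨ (m 0 = 4 ∧ m 1 = 2 ∧ m 2 = 2)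
      ∨ (m 0 = 4 ∧ m 1 = 1 ∧ m 2 = 3)
      ∨ (m 0 = 4 ∧ m 1 = 0 ∧ m 2 = 4)
      ∨ (m 0 = 3 ∧ m 1 = 5 ∧ m 2 = 0)
      ∨ (m 0 = 3 ∧ m 1 = 4 ∧ m 2 = 1)
      ∨ (m 0 = 3 ∧ m 1 = 3 ∧ m 2 = 2)
      ∨ (m 0 = 3 ∧ m 1 = 2 ∧ m 2 = 3)
      ∨ (m 0 = 3 ∧ m 1 = 1 ∧ m 2 = 4)
      ∨ (m 0 = 3 ∧ m 1 = 0 ∧ m 2 = 5)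
      ∨ (m 0 = 2 ∧ m 1 = 4 ∧ m 2 = 2)
      ∨ (m 0 = 2 ∧ m 1 = 3 ∧ m 2 = 3)
      ∨ (m 0 = 2 ∧ m 1 = 2 ∧ m 2 = 4)
      ∨ (m 0 = 2 ∧ m 1 = 1 ∧ m 2 = 5)
      ∨ (m 0 = 2 ∧ m 1 = 0 ∧ m 2 = 6)
      ∨ (m 0 = 1 ∧ m 1 = 3 ∧ m 2 = 4)
      ∨ (m 0 = 1 ∧ m 1 = 2 ∧ m 2 = 5)
      ∨ (m 0 = 1 ∧ m 1 = 1 ∧ m 2 = 6)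
      ∨ (m 0 = 1 ∧ m 1 = 0 ∧ m 2 = 7)
      ∨ (m 0 = 0 ∧ m 1 = 2 ∧ m 2 = 6)
      ∨ (m 0 = 0 ∧ m 1 = 1 ∧ m 2 = 7)
      ∨ (m 0 = 0 ∧ m 1 = 0 ∧ m 2 = 8) := by
  intro m hm
  by_contra hcon
  simp only [not_or] at hcon
  rw [MvPolynomial.mem_support_iff] at hm
  apply hm
  rw [hF]
  simp only [MvPolynomial.coeff_add]
  rw [coeff_mono3_ne hcon.1, coeff_mono3_ne hcon.2.1, coeff_mono3_ne hcon.2.2.1, coeff_mono3_ne hcon.2.2.2.1, coeff_mono3_ne hcon.2.2.2.2.1, coeff_mono3_ne hcon.2.2.2.2.2.1, coeff_mono3_ne hcon.2.2.2.2.2.2.1, coeff_mono3_ne hcon.2.2.2.2.2.2.2.1, coeff_mono3_ne hcon.2.2.2.2.2.2.2.2.1, coeff_mono3_ne hcon.2.2.2.2.2.2.2.2.2.1, coeff_mono3_ne hcon.2.2.2.2.2.2.2.2.2.2.1, coeff_mono3_ne hcon.2.2.2.2.2.2.2.2.2.2.2.1, coeff_mono3_ne hcon.2.2.2.2.2.2.2.2.2.2.2.2.1,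 coeff_mono3_ne hcon.2.2.2.2.2.2.2.2.2.2.2.2.2.1, coeff_mono3_ne hcon.2.2.2.2.2.2.2.2.2.2.2.2.2.2.1, coeff_mono3_ne hcon.2.2.2.2.2.2.2.2.2.2.2.2.2.2.2.1, coeff_mono3_ne hcon.2.2.2.2.2.2.2.2.2.2.2.2.2.2.2.2.1, coeff_mono3_ne hcon.2.2.2.2.2.2.2.2.2.2.2.2.2.2.2.2.2.1, coeff_mono3_ne hcon.2.2.2.2.2.2.2.2.2.2.2.2.2.2.2.2.2.2.1, coeff_mono3_ne hcon.2.2.2.2.2.2.2.2.2.2.2.2.2.2.2.2.2.2.2.1, coeff_mono3_ne hcon.2.2.2.2.2.2.2.2.2.2.2.2.2.2.2.2.2.2.2.2.1, coeff_mono3_ne hcon.2.2.2.2.2.2.2.2.2.2.2.2.2.2.2.2.2.2.2.2.2.1, coeff_mono3_ne hcon.2.2.2.2.2.2.2.2.2.2.2.2.2.2.2.2.2.2.2.2.2.2]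
  norm_num

lemma coeff_target :
    MvPolynomial.coeff (Finsupp.single 0 3 + Finsupp.single 1 5) Fphi = 29927 := by
  have ht : (Finsupp.single 0 3 + Finsupp.single 1 5 : Fin 3 →₀ ℕ) = fs3 3 5 0 := by
    simp [fs3]
  rw [ht, hF]
  simp only [MvPolynomial.coeff_add]
  rw [coeff_mono3_ne (m := fs3 3 5 0) (a := 4) (b := 4) (c := 0) (k := 24082)
      (by simp [fs3_apply_0, fs3_apply_1, fs3_apply_2]),
    coeff_mono3_ne (m := fs3 3 5 0) (a := 4) (b := 3) (c := 1) (k := 3438)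
      (by simp [fs3_apply_0, fs3_apply_1, fs3_apply_2]),
    coeff_mono3_ne (m := fs3 3 5 0) (a := 4) (b := 2) (c := 2) (k := 4775)
      (by simp [fs3_apply_0, fs3_apply_1, fs3_apply_2]),
    coeff_mono3_ne (m := fs3 3 5 0) (a := 4) (b := 1) (c := 3) (k := 29499)
      (by simp [fs3_apply_0, fs3_apply_1, fs3_apply_2]),
    coeff_mono3_ne (m := fs3 3 5 0) (a := 4) (b := 0) (c := 4) (k := 12698)
      (by simp [fs3_apply_0, fs3_apply_1, fs3_apply_2]),
    coeff_mono3_ne (m := fs3 3 5 0) (a := 3) (b := 4) (c := 1) (k := 14121)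
      (by simp [fs3_apply_0, fs3_apply_1, fs3_apply_2]),
    coeff_mono3_ne (m := fs3 3 5 0) (a := 3) (b := 3) (c := 2) (k := 17243)
      (by simp [fs3_apply_0, fs3_apply_1, fs3_apply_2]),
    coeff_mono3_ne (m := fs3 3 5 0) (a := 3) (b := 2) (c := 3) (k := 3139)
      (by simp [fs3_apply_0, fs3_apply_1, fs3_apply_2]),
    coeff_mono3_ne (m := fs3 3 5 0) (a := 3) (b := 1) (c := 4) (k := 8704)
      (by simp [fs3_apply_0, fs3_apply_1, fs3_apply_2]),
    coeff_mono3_ne (m := fs3 3 5 0) (a := 3) (b := 0) (c := 5) (k := 80)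
      (by simp [fs3_apply_0, fs3_apply_1, fs3_apply_2]),
    coeff_mono3_ne (m := fs3 3 5 0) (a := 2) (b := 4) (c := 2) (k := 28712)
      (by simp [fs3_apply_0, fs3_apply_1, fs3_apply_2]),
    coeff_mono3_ne (m := fs3 3 5 0) (a := 2) (b := 3) (c := 3) (k := 10654)
      (by simp [fs3_apply_0, fs3_apply_1, fs3_apply_2]),
    coeff_mono3_ne (m := fs3 3 5 0) (a := 2) (b := 2) (c := 4) (k := 12817)
      (by simp [fs3_apply_0, fs3_apply_1, fs3_apply_2]),
    coeff_mono3_ne (m := fs3 3 5 0) (a := 2) (b := 1) (c := 5) (k := 8239)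
      (by simp [fs3_apply_0, fs3_apply_1, fs3_apply_2]),
    coeff_mono3_ne (m := fs3 3 5 0) (a := 2) (b := 0) (c := 6) (k := 5515)
      (by simp [fs3_apply_0, fs3_apply_1, fs3_apply_2]),
    coeff_mono3_ne (m := fs3 3 5 0) (a := 1) (b := 3) (c := 4) (k := 28759)
      (by simp [fs3_apply_0, fs3_apply_1, fs3_apply_2]),
    coeff_mono3_ne (m := fs3 3 5 0) (a := 1) (b := 2) (c := 5) (k := 7372)
      (by simp [fs3_apply_0, fs3_apply_1, fs3_apply_2]),
    coeff_mono3_ne (m := fs3 3 5 0) (a := 1) (b := 1) (c := 6) (k := 19696)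
      (by simp [fs3_apply_0, fs3_apply_1, fs3_apply_2]),
    coeff_mono3_ne (m := fs3 3 5 0) (a := 1) (b := 0) (c := 7) (k := 28079)
      (by simp [fs3_apply_0, fs3_apply_1, fs3_apply_2]),
    coeff_mono3_ne (m := fs3 3 5 0) (a := 0) (b := 2) (c := 6) (k := 1944)
      (by simp [fs3_apply_0, fs3_apply_1, fs3_apply_2]),
    coeff_mono3_ne (m := fs3 3 5 0) (a := 0) (b := 1) (c := 7) (k := 24003)
      (by simp [fs3_apply_0, fs3_apply_1, fs3_apply_2]),
    coeff_mono3_ne (m := fs3 3 5 0) (a := 0) (b := 0) (c := 8) (k := 13722)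
      (by simp [fs3_apply_0, fs3_apply_1, fs3_apply_2]),
    show MvPolynomial.coeff (fs3 3 5 0) (monomial (fs3 3 5 0) (29927 : Fp)) = 29927 from by
      rw [MvPolynomial.coeff_monomial, if_pos rfl]]
  norm_num

end Aux

/-- (a) `F_φ` has degree at most 4 in `x`, and its coefficient of `x⁴`
is the stated binary quartic, which is squarefree over `k`; hence `{F_φ = 0}` has an
ordinary quadruple point at `p = [1:0:0]`.
(b) every monomial of `F_φ` has combined degree at least 3 in `x` and `z`, and the
only monomial of combined degree exactly 3 is `29927·x³y⁵`; hence `{F_φ = 0}` has a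
triple point at `p1 = [0:1:0]` with tangent cone the triple line `x = 0`. -/
theorem Fphi_quadruple_and_triple_point :
    ((∀ m ∈ Fphi.support, m 0 ≤ 4) ∧
      ((finSuccEquiv kbar 2) Fphik).coeff 4 = quarticCoeff ∧
      Squarefree quarticCoeff) ∧
    ((∀ m ∈ Fphi.support, 3 ≤ m 0 + m 2) ∧
      (∀ m ∈ Fphi.support, m 0 + m 2 = 3 → m 0 = 3 ∧ m 1 = 5 ∧ m 2 = 0) ∧
      MvPolynomial.coeff (Finsupp.single 0 3 + Finsupp.single 1 5) Fphi = 29927) := by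
  refine ⟨⟨?_, coeff4, quartic_squarefree⟩, ?_, ?_, coeff_target⟩
  · intro m hm
    rcases support_char m hm with ⟨h0,h1,h2⟩|⟨h0,h1,h2⟩|⟨h0,h1,h2⟩|⟨h0,h1,h2⟩|⟨h0,h1,h2⟩|⟨h0,h1,h2⟩|⟨h0,h1,h2⟩|⟨h0,h1,h2⟩|⟨h0,h1,h2⟩|⟨h0,h1,h2⟩|⟨h0,h1,h2⟩|⟨h0,h1,h2⟩|⟨h0,h1,h2⟩|⟨h0,h1,h2⟩|⟨h0,h1,h2⟩|⟨h0,h1,h2⟩|⟨h0,h1,h2⟩|⟨h0,h1,h2⟩|⟨h0,h1,h2⟩|⟨h0,h1,h2⟩|⟨h0,h1,h2⟩|⟨h0,h1,h2⟩|⟨h0,h1,h2⟩ <;> omega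
  · intro m hm
    rcases support_char m hm with ⟨h0,h1,h2⟩|⟨h0,h1,h2⟩|⟨h0,h1,h2⟩|⟨h0,h1,h2⟩|⟨h0,h1,h2⟩|⟨h0,h1,h2⟩|⟨h0,h1,h2⟩|⟨h0,h1,h2⟩|⟨h0,h1,h2⟩|⟨h0,h1,h2⟩|⟨h0,h1,h2⟩|⟨h0,h1,h2⟩|⟨h0,h1,h2⟩|⟨h0,h1,h2⟩|⟨h0,h1,h2⟩|⟨h0,h1,h2⟩|⟨h0,h1,h2⟩|⟨h0,h1,h2⟩|⟨h0,h1,h2⟩|⟨h0,h1,h2⟩|⟨h0,h1,h2⟩|⟨h0,h1,h2⟩|⟨h0,h1,h2⟩ <;> omega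
  · intro m hm heq
    rcases support_char m hm with ⟨h0,h1,h2⟩|⟨h0,h1,h2⟩|⟨h0,h1,h2⟩|⟨h0,h1,h2⟩|⟨h0,h1,h2⟩|⟨h0,h1,h2⟩|⟨h0,h1,h2⟩|⟨h0,h1,h2⟩|⟨h0,h1,h2⟩|⟨h0,h1,h2⟩|⟨h0,h1,h2⟩|⟨h0,h1,h2⟩|⟨h0,h1,h2⟩|⟨h0,h1,h2⟩|⟨h0,h1,h2⟩|⟨h0,h1,h2⟩|⟨h0,h1,h2⟩|⟨h0,h1,h2⟩|⟨h0,h1,h2⟩|⟨h0,h1,h2⟩|⟨h0,h1,h2⟩|⟨h0,h1,h2⟩|⟨h0,h1,h2⟩ <;> omega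
end
end
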